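/- Let K be a field and X a set. In RT(X), for every x ∈ X, every p ≥ 1 and all rooted trees T₁,…,T_p decorated by X, the following identity holds: B(x, T₁,…,T_p) = B(x, T₂,…,T_p) ⋆ T₁ − Σ_{j=2}^{p} B(x, T₂,…,T_j ⋆ T₁,…,T_p), where B(x, S₁,…,S_q) denotes the rooted tree with root decorated by x and branches S₁,…,S_q, extended linearly in each branch argument (so that B applied to the linear combination T_j ⋆ T₁ of trees in place of the j-th branch makes sense in RT(X)). -/

import Mathlib

/-- Planar presentation of a rooted tree decorated by `X`: a node label together with a
finite list of branches (each itself a decorated rooted tree). -/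
inductive PreTree (X : Type*) where
  | node : X → List (PreTree X) → PreTree X

/-- Two planar presentations define the same abstract decorated rooted tree: the root
labels agree and the branch lists agree up to pointwise equivalence and permutation
(so that the branches of each vertex form a multiset). -/
inductive PTEquiv {X : Type*} : PreTree X → PreTree X → Prop where
  | node (x : X) {l₁ l₂ l₃ : List (PreTree X)} :
      List.Forall₂ PTEquiv l₁ l₂ → l₂.Perm l₃ → PTEquiv (.node x l₁) (.node x l₃)

/-- A rooted tree decorated by `X`: a node labelled by an element of `X` together with a
finite multiset of branches. -/
def DecoratedTree (X : Type*) := Quot (@PTEquiv X)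

/-- The decorated rooted tree presented by a planar tree. -/
def DecoratedTree.mk {X : Type*} (t : PreTree X) : DecoratedTree X := Quot.mk _ t

mutual
/-- `graftList s t` is the list, indexed by the vertices `v` of `t`, of the graftings of
`s` at `v` in `t` (i.e. the tree obtained from `t` by adding `s` as a new branch of `v`). -/
def graftList {X : Type*} (s : PreTree X) : PreTree X → List (PreTree X)
  | .node x l =>
      PreTree.node x (s :: l) :: (graftListAux s l).map fun l' => PreTree.node x l'
/-- Auxiliary: graftings of `s` at vertices of the trees of a branch list. -/
def graftListAux {X : Type*} (s : PreTree X) : List (PreTree X) → List (List (PreTree X))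
  | [] => []
  | t :: ts =>
      ((graftList s t).map fun t' => t' :: ts) ++ (graftListAux s ts).map fun ts' => t :: ts'
end

/-- `T₁ ⋆ T₂` for trees: the sum, over all vertices `v` of `T₁`, of the grafting of `T₂`
at `v` in `T₁`, an element of the free `K`-vector space `RT(X)` on decorated rooted trees. -/
noncomputable def treeStar (K : Type*) [Field K] {X : Type*} (t s : PreTree X) :
    DecoratedTree X →₀ K :=
  ((graftList s t).map fun u => Finsupp.single (DecoratedTree.mk u) (1 : K)).sum

/-- The bilinear star (grafting) product on `RT(X) = DecoratedTree X →₀ K`. -/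
noncomputable def star (K : Type*) [Field K] {X : Type*}
    (a b : DecoratedTree X →₀ K) : DecoratedTree X →₀ K :=
  a.sum fun t c => b.sum fun s c' => (c * c') • treeStar K t.out s.out

/-- The basis vector of `RT(X)` corresponding to a decorated rooted tree. -/
noncomputable def single1 (K : Type*) [Field K] {X : Type*} (t : DecoratedTree X) :
    DecoratedTree X →₀ K := Finsupp.single t 1


/-- `B(x, T₁, …, T_p)`: the decorated rooted tree whose root is labelled `x` and whose
branches are `T₁, …, T_p` (given as decorated rooted trees, via chosen planar
representatives). -/
noncomputable def nodeQ {X : Type*} (x : X) (l : List (DecoratedTree X)) :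
    DecoratedTree X :=
  DecoratedTree.mk (PreTree.node x (l.map Quot.out))

/-- The multilinear extension of `B`: `Bmulti x [a₁, …, a_p]` is `B(x, -, …, -)` applied to
the linear combinations `a₁, …, a_p ∈ RT(X)`, extended linearly in each branch argument. -/
noncomputable def BmultiAux (K : Type*) [Field K] {X : Type*} (x : X) :
    List (DecoratedTree X →₀ K) → List (DecoratedTree X) → (DecoratedTree X →₀ K)
  | [], acc => Finsupp.single (nodeQ x acc.reverse) 1
  | a :: as, acc => a.sum fun t c => c • BmultiAux K x as (t :: acc)

/-- `B(x, a₁, …, a_p)` for `a₁, …, a_p ∈ RT(X)`, multilinear in the branch arguments. -/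
noncomputable def Bmulti (K : Type*) [Field K] {X : Type*} (x : X)
    (l : List (DecoratedTree X →₀ K)) : DecoratedTree X →₀ K :=
  BmultiAux K x l []

/-!
Grafting `T₁` onto `B(x, T₂, …, T_p)` either attaches it to the root, which gives
`B(x, T₁, …, T_p)`, or to a vertex of some branch `T_j`; by multilinearity of `B` the graftings
into `T_j` add up to `B(x, T₂, …, T_j ⋆ T₁, …, T_p)`.

The real work is that `⋆` is computed on chosen planar representatives. The multiset of classes
of the graftings of `s` into `t` depends only on the class of `t`: by induction on planar trees,
tracking for a list of branches the multiset of branch multisets that grafting into it produces.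
-/

namespace PTEquiv

variable {X : Type*}

mutual
protected theorem refl : ∀ t : PreTree X, PTEquiv t t
  | .node x l => .node x (forall₂_refl l) (.refl l)
theorem forall₂_refl : ∀ l : List (PreTree X), List.Forall₂ PTEquiv l l
  | [] => .nil
  | t :: ts => .cons (PTEquiv.refl t) (forall₂_refl ts)
end

mutual
protected theorem symm : ∀ {t u : PreTree X}, PTEquiv t u → PTEquiv u t
  | _, _, .node x hf p => by
      obtain ⟨m, hm, pm⟩ := List.perm_comp_forall₂ p.symm (forall₂_symm hf)
      exact .node x hm pm
theorem forall₂_symm : ∀ {l₁ l₂ : List (PreTree X)},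
    List.Forall₂ PTEquiv l₁ l₂ → List.Forall₂ PTEquiv l₂ l₁
  | _, _, .nil => .nil
  | _, _, .cons h hs => .cons h.symm (forall₂_symm hs)
end

mutual
protected theorem trans : ∀ {t u v : PreTree X}, PTEquiv t u → PTEquiv u v → PTEquiv t v
  | _, _, _, .node x hf₁ p₁, .node _ hf₂ p₂ => by
      obtain ⟨m, hm, pm⟩ := List.perm_comp_forall₂ p₁ hf₂
      exact .node x (forall₂_trans hf₁ hm) (pm.trans p₂)
theorem forall₂_trans : ∀ {l₁ l₂ l₃ : List (PreTree X)},
    List.Forall₂ PTEquiv l₁ l₂ → List.Forall₂ PTEquiv l₂ l₃ → List.Forall₂ PTEquiv l₁ l₃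
  | _, _, _, .nil, .nil => .nil
  | _, _, _, .cons h hs, .cons h' hs' => .cons (h.trans h') (forall₂_trans hs hs')
end

theorem equivalence : Equivalence (@PTEquiv X) :=
  ⟨PTEquiv.refl, PTEquiv.symm, PTEquiv.trans⟩

end PTEquiv

namespace DecoratedTree

open List

variable {X : Type*}

theorem mk_eq_mk_iff {a b : PreTree X} : mk a = mk b ↔ PTEquiv a b :=
  ⟨fun h => PTEquiv.equivalence.eqvGen_iff.mp (Quot.eqvGen_exact h), Quot.sound⟩

@[simp]
theorem mk_out (a : DecoratedTree X) : mk a.out = a :=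
  Quot.out_eq a

theorem ptEquiv_out_mk (t : PreTree X) : PTEquiv (mk t).out t :=
  mk_eq_mk_iff.mp (mk_out _)

theorem mk_node_eq_of_forall₂ (x : X) {l l' : List (PreTree X)} (h : Forall₂ PTEquiv l l') :
    mk (.node x l) = mk (.node x l') :=
  Quot.sound (.node x h (.refl _))

def branchClasses (l : List (PreTree X)) : Multiset (DecoratedTree X) :=
  (l.map mk : List (DecoratedTree X))

@[simp]
theorem branchClasses_cons (t : PreTree X) (l : List (PreTree X)) :
    branchClasses (t :: l) = mk t ::ₘ branchClasses l :=
  rfl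

theorem branchClasses_eq_of_forall₂ {l l' : List (PreTree X)} (h : Forall₂ PTEquiv l l') :
    branchClasses l = branchClasses l' := by
  induction h with
  | nil => rfl
  | cons h _ ih => rw [branchClasses_cons, branchClasses_cons, ih, mk_eq_mk_iff.mpr h]

theorem branchClasses_eq_of_perm {l l' : List (PreTree X)} (p : l.Perm l') :
    branchClasses l = branchClasses l' :=
  Multiset.coe_eq_coe.mpr (p.map _)

noncomputable def nodeOf (x : X) : Multiset (DecoratedTree X) → DecoratedTree X :=
  Quotient.lift (fun L => mk (.node x (L.map Quot.out)))
    fun _ _ p => Quot.sound (.node x (PTEquiv.forall₂_refl _) (p.map _))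

theorem nodeOf_coe (x : X) (L : List (DecoratedTree X)) : nodeOf x L = nodeQ x L :=
  rfl

theorem nodeOf_branchClasses (x : X) (l : List (PreTree X)) :
    nodeOf x (branchClasses l) = mk (.node x l) := by
  refine mk_node_eq_of_forall₂ x ?_
  show Forall₂ PTEquiv ((l.map mk).map Quot.out) l
  erw [map_map, forall₂_map_left_iff, forall₂_same]
  exact fun t _ => ptEquiv_out_mk t

-- `DecoratedTree` is not reducible, so `Quot.out` gets its type pinned to keep `rw` working.
theorem map_mk_map_out (L : List (DecoratedTree X)) :
    (L.map (Quot.out : DecoratedTree X → PreTree X)).map mk = L := by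
  induction L with
  | nil => rfl
  | cons a L ih => exact congrArg₂ List.cons (mk_out a) ih

theorem ptEquiv_out_nodeQ (x : X) (L : List (DecoratedTree X)) :
    PTEquiv (nodeQ x L).out (.node x (L.map (Quot.out : DecoratedTree X → PreTree X))) :=
  ptEquiv_out_mk _

theorem nodeQ_eq_mk_node (x : X) {L : List (DecoratedTree X)} {l : List (PreTree X)}
    (h : L = l.map mk) : nodeQ x L = mk (.node x l) := by
  rw [← nodeOf_coe, h]
  exact nodeOf_branchClasses x l

def graftClasses (s t : PreTree X) : Multiset (DecoratedTree X) :=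
  ((graftList s t).map mk : List (DecoratedTree X))

def branchGraftClasses (s : PreTree X) (l : List (PreTree X)) :
    Multiset (Multiset (DecoratedTree X)) :=
  ((graftListAux s l).map branchClasses : List (Multiset (DecoratedTree X)))

theorem graftClasses_node (s : PreTree X) (x : X) (l : List (PreTree X)) :
    graftClasses s (.node x l)
      = mk (.node x (s :: l)) ::ₘ (branchGraftClasses s l).map (nodeOf x) := by
  simp [graftClasses, branchGraftClasses, graftList, Function.comp_def, nodeOf_branchClasses]

theorem branchGraftClasses_cons (s t : PreTree X) (l : List (PreTree X)) :
    branchGraftClasses s (t :: l)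
      = (graftClasses s t).map (· ::ₘ branchClasses l)
        + (branchGraftClasses s l).map (mk t ::ₘ ·) := by
  simp [graftClasses, branchGraftClasses, graftListAux, Function.comp_def]

theorem branchGraftClasses_eq_of_perm (s : PreTree X) {l l' : List (PreTree X)}
    (p : l.Perm l') : branchGraftClasses s l = branchGraftClasses s l' := by
  induction p with
  | nil => rfl
  | cons t _ ih => rw [branchGraftClasses_cons, branchGraftClasses_cons, ih,
      branchClasses_eq_of_perm ‹_›]
  | swap u v l =>
    simp only [branchGraftClasses_cons, branchClasses_cons, Multiset.map_add, Multiset.map_map,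
      Function.comp_def]
    rw [add_left_comm]
    refine congr_arg₂ (· + ·) ?_ (congr_arg₂ (· + ·) ?_ ?_) <;>
      exact Multiset.map_congr rfl fun _ _ => Multiset.cons_swap _ _ _
  | trans _ _ ih₁ ih₂ => exact ih₁.trans ih₂

mutual
theorem graftClasses_congr (s : PreTree X) :
    ∀ {t t' : PreTree X}, PTEquiv t t' → graftClasses s t = graftClasses s t'
  | _, _, .node x hf p => by
      rw [graftClasses_node, graftClasses_node, branchGraftClasses_congr s hf,
        branchGraftClasses_eq_of_perm s p,
        mk_eq_mk_iff.mpr (.node x (.cons (.refl s) hf) (p.cons s))]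
theorem branchGraftClasses_congr (s : PreTree X) :
    ∀ {l l' : List (PreTree X)}, Forall₂ PTEquiv l l' →
      branchGraftClasses s l = branchGraftClasses s l'
  | _, _, .nil => rfl
  | _, _, .cons h hs => by
      rw [branchGraftClasses_cons, branchGraftClasses_cons, graftClasses_congr s h,
        branchGraftClasses_congr s hs, branchClasses_eq_of_forall₂ hs, mk_eq_mk_iff.mpr h]
end

theorem sum_map_graftListAux {M α : Type*} [AddCommMonoid M] (s : PreTree X)
    (f : α → PreTree X) (g : List (PreTree X) → M) (Ts : List α) :
    ((graftListAux s (Ts.map f)).map g).sum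
      = ∑ j : Fin Ts.length, ((graftList s (f Ts[j])).map fun u => g ((Ts.map f).set j u)).sum := by
  induction Ts generalizing g with
  | nil => simp [graftListAux]
  | cons T Ts ih => simp [graftListAux, Fin.sum_univ_succ, ih, Function.comp_def]

end DecoratedTree

section Linear

open DecoratedTree Finsupp

variable (K : Type*) [Field K] {X : Type*}

theorem treeStar_eq_sum_graftClasses (t s : PreTree X) :
    treeStar K t s = ((graftClasses s t).map fun d => single d (1 : K)).sum := by
  simp [treeStar, graftClasses, Function.comp_def]

theorem treeStar_congr {t t' : PreTree X} (s : PreTree X) (h : PTEquiv t t') :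
    treeStar K t s = treeStar K t' s := by
  rw [treeStar_eq_sum_graftClasses, treeStar_eq_sum_graftClasses, graftClasses_congr s h]

theorem treeStar_node (x : X) (l : List (PreTree X)) (s : PreTree X) :
    treeStar K (.node x l) s = single1 K (mk (.node x (s :: l)))
      + ((graftListAux s l).map fun l' => single1 K (mk (.node x l'))).sum := by
  simp [treeStar, graftList, single1, DecoratedTree.mk, Function.comp_def]

theorem star_single1 (a b : DecoratedTree X) :
    star K (single1 K a) (single1 K b) = treeStar K a.out b.out := by
  simp [_root_.star, single1]

theorem BmultiAux_map_single1 (x : X) :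
    ∀ (L acc : List (DecoratedTree X)),
      BmultiAux K x (L.map (single1 K)) acc = single1 K (nodeQ x (acc.reverse ++ L))
  | [], acc => by simp [BmultiAux, single1]
  | t :: L, acc => by simp [BmultiAux, single1, BmultiAux_map_single1 x L]

theorem Bmulti_map_single1 (x : X) (L : List (DecoratedTree X)) :
    Bmulti K x (L.map (single1 K)) = single1 K (nodeQ x L) := by
  simp [Bmulti, BmultiAux_map_single1]

theorem BmultiAux_set_map_single1 (x : X) (a : DecoratedTree X →₀ K) :
    ∀ (L acc : List (DecoratedTree X)) (j : ℕ), j < L.length →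
      BmultiAux K x ((L.map (single1 K)).set j a) acc
        = linearCombination K (fun t => single1 K (nodeQ x (acc.reverse ++ L.set j t))) a
  | [], _, _, hj => by simp at hj
  | t :: L, acc, 0, _ => by simp [BmultiAux, BmultiAux_map_single1, linearCombination_apply]
  | t :: L, acc, j + 1, hj => by
      simp [BmultiAux, single1, BmultiAux_set_map_single1 x a L (t :: acc) j (by simpa using hj)]

theorem Bmulti_set_map_single1 (x : X) (a : DecoratedTree X →₀ K) (L : List (DecoratedTree X))
    {j : ℕ} (hj : j < L.length) :
    Bmulti K x ((L.map (single1 K)).set j a)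
      = linearCombination K (fun t => single1 K (nodeQ x (L.set j t))) a := by
  simp [Bmulti, BmultiAux_set_map_single1 K x a L [] j hj]

theorem Bmulti_set_star_single1 (x : X) (T : DecoratedTree X) (Ts : List (DecoratedTree X))
    (j : Fin Ts.length) :
    Bmulti K x ((Ts.map (single1 K)).set j (star K (single1 K Ts[j]) (single1 K T)))
      = ((graftList T.out Ts[j].out).map fun u => single1 K
          (mk (.node x ((Ts.map (Quot.out : DecoratedTree X → PreTree X)).set j u)))).sum := by
  rw [Bmulti_set_map_single1 K x _ Ts j.isLt, star_single1, treeStar, map_list_sum, List.map_map]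
  refine congrArg List.sum (List.map_congr_left fun u _ => ?_)
  rw [Function.comp_apply, linearCombination_single, one_smul]
  refine congrArg (single1 K) (nodeQ_eq_mk_node x ?_)
  rw [List.map_set]
  exact congrArg (fun L : List (DecoratedTree X) => L.set j (mk u)) (map_mk_map_out Ts).symm

end Linear

/-- In `RT(X)`, for every `x ∈ X`, every `p ≥ 1` and all decorated rooted
trees `T₁, …, T_p` (here `T₁` together with the list `Ts = [T₂, …, T_p]`):
`B(x, T₁, …, T_p) = B(x, T₂, …, T_p) ⋆ T₁ − Σ_{j=2}^{p} B(x, T₂, …, T_j ⋆ T₁, …, T_p)`,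
where `B` is extended linearly in each branch argument. -/
theorem ungrafting_identity (K : Type*) [Field K] (X : Type*)
    (x : X) (T₁ : DecoratedTree X) (Ts : List (DecoratedTree X)) :
    Bmulti K x ((T₁ :: Ts).map fun t => single1 K t)
      = star K (Bmulti K x (Ts.map fun t => single1 K t)) (single1 K T₁)
        - ∑ j : Fin Ts.length,
            Bmulti K x
              ((Ts.map fun t => single1 K t).set j
                (star K (single1 K (Ts.get j)) (single1 K T₁))) := by
  rw [eq_sub_iff_add_eq, Bmulti_map_single1, Bmulti_map_single1, star_single1,
    treeStar_congr K _ (DecoratedTree.ptEquiv_out_nodeQ x Ts), treeStar_node]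
  congr 1
  exact (Finset.sum_congr rfl fun j _ => Bmulti_set_star_single1 K x T₁ Ts j).trans
    (DecoratedTree.sum_map_graftListAux T₁.out (Quot.out : DecoratedTree X → PreTree X)
      (fun l => single1 K (DecoratedTree.mk (.node x l))) Ts).symm
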